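/- arXiv:2512.24344 — 5 statements merged into one kernel-verified Lean document; each statement's English description precedes it below -/
import Mathlib

section
/- Bloch–Messiah decomposition: Let N be a positive natural number and let S ∈ Sp(2N,ℝ). Then there exist matrices O, O′ ∈ Sp(2N,ℝ) that are also orthogonal (OᵀO = I and O′ᵀO′ = I) and real numbers r₁,…,r_N such that S = O′ · (⊕_{j=1}^N exp(r_j·Z)) · O, where exp(r_j·Z) is the 2×2 diagonal matrix diag(e^{r_j}, e^{−r_j}). -/
/-!
Put `A := S Sᵀ` and `J := Ωᵀ`. Then `A` is symmetric, positive definite and symplectic, which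
for a symmetric matrix means `A J A = J`; hence `J` maps every `λ`-eigenvector of `A` to a
`λ⁻¹`-eigenvector orthogonal to it. The plane spanned by a unit eigenvector `u` and `J u` is
invariant under `A` and `J`, and so is its orthogonal complement, so induction on the dimension
gives an orthonormal eigenbasis of the form `u_j, J u_j`. The matrix `O'` with these columns is
orthogonal and commutes with `Ω`, hence symplectic, and `A = O' D² O'ᵀ` with
`D = ⊕_j exp(r_j Z)`. Finally `O := D⁻¹ O'ᵀ S` is symplectic as a product of symplectic
matrices and orthogonal because `O Oᵀ = D⁻¹ O'ᵀ A O' D⁻¹ = 1`.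
-/

open Matrix Kronecker

/-- The standard symplectic form `Ω = ⊕_{j=1}^N Ω₁` on `ℝ^{2N}`, with the
`2N` coordinates indexed by `Fin N × Fin 2` (mode index, quadrature index). -/
noncomputable def Omega (N : ℕ) : Matrix (Fin N × Fin 2) (Fin N × Fin 2) ℝ :=
  (1 : Matrix (Fin N) (Fin N) ℝ) ⊗ₖ !![0, 1; -1, 0]

/-- The direct sum of single-mode squeezers `⊕_{j=1}^N exp(r_j Z)`, i.e. the
diagonal matrix with entries `e^{r_j}, e^{-r_j}` in the `j`-th mode. -/
noncomputable def squeezerBlock (N : ℕ) (r : Fin N → ℝ) :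
    Matrix (Fin N × Fin 2) (Fin N × Fin 2) ℝ :=
  Matrix.diagonal (fun p => if p.2 = 0 then Real.exp (r p.1) else Real.exp (-(r p.1)))

open Module (finrank)
open RealInnerProductSpace

section Algebraic

variable {𝕜 V : Type*} [Field 𝕜] [AddCommGroup V] [Module 𝕜 V]

def complexFrame {n : ℕ} (J : V →ₗ[𝕜] V) (u : Fin n → V) (p : Fin n × Fin 2) : V :=
  ![u p.1, J (u p.1)] p.2

theorem apply_map_eq_inv_smul_of_apply_eq_smul {T J : V →ₗ[𝕜] V}
    (hTJT : ∀ x, T (J (T x)) = J x) {u : V} {μ : 𝕜} (hu : T u = μ • u) :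
    T (J u) = μ⁻¹ • J u := by
  have h := hTJT u
  rw [hu, map_smul, map_smul] at h
  rcases eq_or_ne μ 0 with rfl | hμ
  · rw [zero_smul] at h
    rw [← h, map_zero, smul_zero]
  · calc T (J u) = μ⁻¹ • μ • T (J u) := by rw [smul_smul, inv_mul_cancel₀ hμ, one_smul]
      _ = μ⁻¹ • J u := by rw [h]

theorem span_pair_mem_invtSubmodule_of_apply_eq_smul {T J : V →ₗ[𝕜] V}
    (hTJT : ∀ x, T (J (T x)) = J x) {u : V} {μ : 𝕜} (hu : T u = μ • u) :
    Submodule.span 𝕜 (Set.range ![u, J u]) ∈ Module.End.invtSubmodule T := by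
  have hu0 : u ∈ Submodule.span 𝕜 (Set.range ![u, J u]) := Submodule.subset_span ⟨0, rfl⟩
  have hu1 : J u ∈ Submodule.span 𝕜 (Set.range ![u, J u]) := Submodule.subset_span ⟨1, rfl⟩
  refine Submodule.span_le.mpr (Set.range_subset_iff.mpr fun i => ?_)
  fin_cases i
  · simpa [hu] using Submodule.smul_mem _ μ hu0
  · simpa [apply_map_eq_inv_smul_of_apply_eq_smul hTJT hu] using Submodule.smul_mem _ μ⁻¹ hu1

theorem span_pair_mem_invtSubmodule_of_map_map {J : V →ₗ[𝕜] V} (hJJ : ∀ x, J (J x) = -x)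
    (u : V) : Submodule.span 𝕜 (Set.range ![u, J u]) ∈ Module.End.invtSubmodule J := by
  have hu : u ∈ Submodule.span 𝕜 (Set.range ![u, J u]) := Submodule.subset_span ⟨0, rfl⟩
  refine Submodule.span_le.mpr (Set.range_subset_iff.mpr fun i => ?_)
  fin_cases i
  · exact Submodule.subset_span ⟨1, rfl⟩
  · simpa [hJJ] using hu

end Algebraic

section ComplexStructure

variable {V : Type*} [NormedAddCommGroup V] [InnerProductSpace ℝ V]

structure IsCompatibleComplexStructure (J : V →ₗ[ℝ] V) : Prop where
  inner_map_left : ∀ x y, ⟪J x, y⟫ = -⟪x, J y⟫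
  map_map : ∀ x, J (J x) = -x

theorem LinearMap.IsSymmetric.exists_eigenvector_of_mem_invtSubmodule [FiniteDimensional ℝ V]
    {T : V →ₗ[ℝ] V} (hT : T.IsSymmetric) {W : Submodule ℝ V}
    (hW : W ∈ Module.End.invtSubmodule T) (hW0 : 0 < finrank ℝ W) :
    ∃ (μ : ℝ) (u : V), u ∈ W ∧ ‖u‖ = 1 ∧ T u = μ • u := by
  have hTW := hT.restrict_invariant hW
  let i : Fin (finrank ℝ W) := ⟨0, hW0⟩
  exact ⟨hTW.eigenvalues rfl i, hTW.eigenvectorBasis rfl i, (hTW.eigenvectorBasis rfl i).2,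
    (hTW.eigenvectorBasis rfl).orthonormal.1 i,
    congrArg Subtype.val (hTW.apply_eigenvectorBasis rfl i)⟩

namespace IsCompatibleComplexStructure

variable {J : V →ₗ[ℝ] V} (hJ : IsCompatibleComplexStructure J)
include hJ

theorem inner_self_map (x : V) : ⟪x, J x⟫ = 0 := by
  have h := hJ.inner_map_left x x
  rw [real_inner_comm] at h
  linarith

theorem inner_map_map (x y : V) : ⟪J x, J y⟫ = ⟪x, y⟫ := by
  rw [hJ.inner_map_left, hJ.map_map, inner_neg_right, neg_neg]

theorem norm_map (x : V) : ‖J x‖ = ‖x‖ := by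
  have h := hJ.inner_map_map x x
  rw [real_inner_self_eq_norm_sq, real_inner_self_eq_norm_sq] at h
  exact (sq_eq_sq₀ (norm_nonneg _) (norm_nonneg _)).mp h

theorem orthogonal_mem_invtSubmodule {K : Submodule ℝ V}
    (hK : K ∈ Module.End.invtSubmodule J) : Kᗮ ∈ Module.End.invtSubmodule J :=
  fun x hx y hy => by
    rw [← neg_eq_zero, ← hJ.inner_map_left]
    exact hx (J y) (hK hy)

theorem orthonormal_complexFrame {n : ℕ} {u : Fin n → V}
    (hu : ∀ i j, ⟪u i, u j⟫ = if i = j then 1 else 0) (huJ : ∀ i j, ⟪u i, J (u j)⟫ = 0) :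
    Orthonormal ℝ (complexFrame J u) := by
  have hJu : ∀ i j, ⟪J (u i), u j⟫ = 0 := fun i j => by
    rw [hJ.inner_map_left, huJ, neg_zero]
  rw [orthonormal_iff_ite]
  rintro ⟨i, k⟩ ⟨j, l⟩
  fin_cases k <;> fin_cases l <;>
    simp [complexFrame, hu, huJ, hJu, hJ.inner_map_map, Prod.ext_iff]

theorem finrank_span_pair {u : V} (hu : ‖u‖ = 1) :
    finrank ℝ (Submodule.span ℝ (Set.range ![u, J u])) = 2 := by
  have hon : Orthonormal ℝ ![u, J u] := by
    rw [orthonormal_iff_ite]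
    intro i j
    fin_cases i <;> fin_cases j <;>
      simp [hJ.inner_self_map, hJ.norm_map, hu, real_inner_comm u]
  simp [finrank_span_eq_card hon.linearIndependent]

theorem pos_of_apply_eq_smul {T : V →ₗ[ℝ] V} (hT : T.IsPositive)
    (hTJT : ∀ x, T (J (T x)) = J x) {u : V} (hu0 : u ≠ 0) {μ : ℝ} (hu : T u = μ • u) :
    0 < μ := by
  have hnonneg : 0 ≤ μ * ‖u‖ ^ 2 := by
    simpa [hu, real_inner_smul_left, real_inner_self_eq_norm_sq] using hT.re_inner_nonneg_left u
  refine lt_of_le_of_ne (nonneg_of_mul_nonneg_left hnonneg (by positivity)) fun hμ => hu0 ?_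
  have hJu : J u = 0 := by rw [← hTJT, hu, ← hμ, zero_smul, map_zero, map_zero]
  have h := hJ.map_map u
  rw [hJu, map_zero] at h
  exact neg_eq_zero.mp h.symm

end IsCompatibleComplexStructure

variable [FiniteDimensional ℝ V] {T J : V →ₗ[ℝ] V}

theorem exists_eigenvectors_of_mem_invtSubmodule (hT : T.IsSymmetric)
    (hJ : IsCompatibleComplexStructure J) (hTJT : ∀ x, T (J (T x)) = J x) :
    ∀ (n : ℕ) (W : Submodule ℝ V), W ∈ Module.End.invtSubmodule T →
      W ∈ Module.End.invtSubmodule J → finrank ℝ W = 2 * n →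
      ∃ (u : Fin n → V) (μ : Fin n → ℝ), (∀ i, u i ∈ W) ∧ (∀ i, T (u i) = μ i • u i) ∧
        (∀ i j, ⟪u i, u j⟫ = if i = j then 1 else 0) ∧ ∀ i j, ⟪u i, J (u j)⟫ = 0 := by
  intro n
  induction n with
  | zero =>
    exact fun _ _ _ _ => ⟨Fin.elim0, Fin.elim0, fun i => i.elim0, fun i => i.elim0,
      fun i => i.elim0, fun i => i.elim0⟩
  | succ n ih =>
    intro W hWT hWJ hW
    obtain ⟨μ, u, huW, hu, hTu⟩ := hT.exists_eigenvector_of_mem_invtSubmodule hWT (by omega)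
    set K := Submodule.span ℝ (Set.range ![u, J u])
    have huK : u ∈ K := Submodule.subset_span ⟨0, rfl⟩
    have hJuK : J u ∈ K := Submodule.subset_span ⟨1, rfl⟩
    have hKW : K ≤ W := Submodule.span_le.mpr (Set.range_subset_iff.mpr fun i => by
      fin_cases i
      exacts [huW, hWJ huW])
    have hKJ : Kᗮ ∈ Module.End.invtSubmodule J :=
      hJ.orthogonal_mem_invtSubmodule (span_pair_mem_invtSubmodule_of_map_map hJ.map_map u)
    have hKT : Kᗮ ∈ Module.End.invtSubmodule T :=
      hT.orthogonalComplement_mem_invtSubmodule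
        (span_pair_mem_invtSubmodule_of_apply_eq_smul hTJT hTu)
    have hdim : finrank ℝ (Kᗮ ⊓ W : Submodule ℝ V) = 2 * n := by
      have := Submodule.finrank_add_inf_finrank_orthogonal hKW
      rw [hJ.finrank_span_pair hu] at this
      omega
    obtain ⟨v, ν, hvW, hTv, hv, hvJ⟩ := ih (Kᗮ ⊓ W)
      (Module.End.invtSubmodule.inf_mem hKT hWT) (Module.End.invtSubmodule.inf_mem hKJ hWJ) hdim
    have hvK : ∀ i, v i ∈ Kᗮ := fun i => (hvW i).1
    refine ⟨Fin.cons u v, Fin.cons μ ν, Fin.cases huW fun i => (hvW i).2, Fin.cases hTu hTv,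
      fun i j => ?_, fun i j => ?_⟩
    · cases i using Fin.cases <;> cases j using Fin.cases <;>
        simp [hu, hv, Submodule.inner_right_of_mem_orthogonal huK (hvK _),
          Submodule.inner_left_of_mem_orthogonal huK (hvK _), Fin.succ_ne_zero,
          (Fin.succ_ne_zero _).symm]
    · cases i using Fin.cases <;> cases j using Fin.cases <;>
        simp [hJ.inner_self_map, hvJ, Submodule.inner_right_of_mem_orthogonal huK (hKJ (hvK _)),
          Submodule.inner_left_of_mem_orthogonal hJuK (hvK _)]

theorem exists_orthonormal_complexFrame (hT : T.IsSymmetric)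
    (hJ : IsCompatibleComplexStructure J) (hTJT : ∀ x, T (J (T x)) = J x) {n : ℕ}
    (hn : finrank ℝ V = 2 * n) :
    ∃ (u : Fin n → V) (μ : Fin n → ℝ),
      Orthonormal ℝ (complexFrame J u) ∧ ∀ i, T (u i) = μ i • u i := by
  obtain ⟨u, μ, -, hTu, hu, huJ⟩ := exists_eigenvectors_of_mem_invtSubmodule hT hJ hTJT n ⊤
    (Module.End.invtSubmodule.top_mem T) (Module.End.invtSubmodule.top_mem J)
    (by rw [finrank_top, hn])
  exact ⟨u, μ, hJ.orthonormal_complexFrame hu huJ, hTu⟩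

end ComplexStructure

def matrixOfColumns {ι : Type*} (c : ι → EuclideanSpace ℝ ι) : Matrix ι ι ℝ :=
  Matrix.of fun p q => c q p

section Columns

variable {ι : Type*} [Fintype ι] [DecidableEq ι]

theorem Matrix.inner_toEuclideanLin_left (M : Matrix ι ι ℝ) (x y : EuclideanSpace ℝ ι) :
    ⟪M.toEuclideanLin x, y⟫ = ⟪x, Mᵀ.toEuclideanLin y⟫ := by
  rw [← conjTranspose_eq_transpose_of_trivial, Matrix.toEuclideanLin_conjTranspose_eq_adjoint,
    LinearMap.adjoint_inner_right]

theorem Matrix.toEuclideanLin_mul_apply (M M' : Matrix ι ι ℝ) (x : EuclideanSpace ℝ ι) :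
    (M * M').toEuclideanLin x = M.toEuclideanLin (M'.toEuclideanLin x) := by
  simp

theorem transpose_matrixOfColumns_mul_self {c : ι → EuclideanSpace ℝ ι}
    (hc : Orthonormal ℝ c) : (matrixOfColumns c)ᵀ * matrixOfColumns c = 1 := by
  ext p q
  rw [one_apply, ← orthonormal_iff_ite.mp hc p q]
  simp [matrixOfColumns, mul_apply, PiLp.inner_apply, mul_comm]

theorem mul_matrixOfColumns_apply (M : Matrix ι ι ℝ) (c : ι → EuclideanSpace ℝ ι) (p q : ι) :
    (M * matrixOfColumns c) p q = M.toEuclideanLin (c q) p := by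
  simp [matrixOfColumns, mul_apply, toLpLin_apply, mulVec, dotProduct]

theorem mul_matrixOfColumns_eq {M : Matrix ι ι ℝ} {c : ι → EuclideanSpace ℝ ι} {d : ι → ℝ}
    (hc : ∀ q, M.toEuclideanLin (c q) = d q • c q) :
    M * matrixOfColumns c = matrixOfColumns c * diagonal d := by
  ext p q
  rw [mul_matrixOfColumns_apply, hc, mul_diagonal]
  simp [matrixOfColumns, mul_comm]

theorem transpose_mul_self_eq_one_of_mul_transpose_eq {S P Q : Matrix ι ι ℝ} (hQP : Q * P = 1)
    (hS : S * Sᵀ = P * Pᵀ) : (Q * S)ᵀ * (Q * S) = 1 := by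
  refine mul_eq_one_comm.mp ?_
  calc Q * S * (Q * S)ᵀ = Q * (S * Sᵀ) * Qᵀ := by simp only [transpose_mul, mul_assoc]
    _ = (Q * P) * (Q * P)ᵀ := by rw [hS]; simp only [transpose_mul, mul_assoc]
    _ = 1 := by rw [hQP, transpose_one, one_mul]

end Columns

section Symplectic

variable {N : ℕ}

theorem omega_transpose (N : ℕ) : (Omega N)ᵀ = -Omega N := by
  rw [Omega, ← kroneckerMap_transpose, transpose_one]
  ext ⟨i, k⟩ ⟨j, l⟩
  fin_cases k <;> fin_cases l <;> simp [kroneckerMap_apply]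

theorem omega_mul_omega (N : ℕ) : Omega N * Omega N = -1 := by
  rw [Omega, ← mul_kronecker_mul, mul_one]
  ext ⟨i, k⟩ ⟨j, l⟩
  fin_cases k <;> fin_cases l <;> simp [kroneckerMap_apply, one_apply]

theorem mul_omega_transpose_apply_zero (M : Matrix (Fin N × Fin 2) (Fin N × Fin 2) ℝ)
    (p : Fin N × Fin 2) (j : Fin N) : (M * (Omega N)ᵀ) p (j, 0) = M p (j, 1) := by
  simp [mul_apply, Omega, kroneckerMap_apply, one_apply, Fintype.sum_prod_type, Fin.sum_univ_two]

theorem mul_omega_transpose_apply_one (M : Matrix (Fin N × Fin 2) (Fin N × Fin 2) ℝ)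
    (p : Fin N × Fin 2) (j : Fin N) : (M * (Omega N)ᵀ) p (j, 1) = -M p (j, 0) := by
  simp [mul_apply, Omega, kroneckerMap_apply, one_apply, Fintype.sum_prod_type, Fin.sum_univ_two]

theorem transpose_mul_omega_mul_of_symplectic {S : Matrix (Fin N × Fin 2) (Fin N × Fin 2) ℝ}
    (hS : S * Omega N * Sᵀ = Omega N) : Sᵀ * Omega N * S = Omega N := by
  have hinv : (-(Omega N * Sᵀ * Omega N)) * S = 1 := by
    refine mul_eq_one_comm.mp ?_
    rw [mul_neg, ← mul_assoc, ← mul_assoc, hS, omega_mul_omega, neg_neg]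
  calc Sᵀ * Omega N * S = Omega N * (-(Omega N * Sᵀ * Omega N) * S) := by
        simp only [neg_mul, mul_neg, ← mul_assoc, omega_mul_omega, neg_neg, one_mul]
    _ = Omega N := by rw [hinv, mul_one]

theorem symplectic_mul {S T : Matrix (Fin N × Fin 2) (Fin N × Fin 2) ℝ}
    (hS : S * Omega N * Sᵀ = Omega N) (hT : T * Omega N * Tᵀ = Omega N) :
    S * T * Omega N * (S * T)ᵀ = Omega N := by
  calc S * T * Omega N * (S * T)ᵀ = S * (T * Omega N * Tᵀ) * Sᵀ := by
        simp only [transpose_mul, mul_assoc]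
    _ = Omega N := by rw [hT, hS]

theorem isCompatibleComplexStructure_omega_transpose (N : ℕ) :
    IsCompatibleComplexStructure (Omega N)ᵀ.toEuclideanLin where
  inner_map_left x y := by
    rw [Matrix.inner_toEuclideanLin_left, transpose_transpose, omega_transpose, map_neg,
      LinearMap.neg_apply, inner_neg_right, neg_neg]
  map_map x := by
    rw [← Matrix.toEuclideanLin_mul_apply, omega_transpose, neg_mul_neg, omega_mul_omega,
      map_neg, LinearMap.neg_apply, toLpLin_one, LinearMap.id_apply]

theorem symplectic_matrixOfColumns_complexFrame {u : Fin N → EuclideanSpace ℝ (Fin N × Fin 2)}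
    (hu : Orthonormal ℝ (complexFrame (Omega N)ᵀ.toEuclideanLin u)) :
    matrixOfColumns (complexFrame (Omega N)ᵀ.toEuclideanLin u) * Omega N *
      (matrixOfColumns (complexFrame (Omega N)ᵀ.toEuclideanLin u))ᵀ = Omega N := by
  set O := matrixOfColumns (complexFrame (Omega N)ᵀ.toEuclideanLin u)
  have hOO : O * Oᵀ = 1 := mul_eq_one_comm.mp (transpose_matrixOfColumns_mul_self hu)
  have hcomm : (Omega N)ᵀ * O = O * (Omega N)ᵀ := by
    ext p ⟨j, k⟩
    rw [mul_matrixOfColumns_apply]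
    fin_cases k
    · simp [mul_omega_transpose_apply_zero, O, matrixOfColumns, complexFrame]
    · simp [mul_omega_transpose_apply_one, O, matrixOfColumns, complexFrame,
        (isCompatibleComplexStructure_omega_transpose N).map_map]
  calc O * Omega N * Oᵀ = -((Omega N)ᵀ * O * Oᵀ) := by
        rw [hcomm, omega_transpose]; noncomm_ring
    _ = Omega N := by rw [mul_assoc, hOO, mul_one, omega_transpose, neg_neg]

theorem squeezerBlock_mul (N : ℕ) (r s : Fin N → ℝ) :
    squeezerBlock N r * squeezerBlock N s = squeezerBlock N (r + s) := by
  rw [squeezerBlock, squeezerBlock, squeezerBlock, diagonal_mul_diagonal]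
  congr 1
  ext p
  split_ifs <;> simp [← Real.exp_add, add_comm]

theorem squeezerBlock_zero (N : ℕ) : squeezerBlock N 0 = 1 := by
  simp [squeezerBlock]

theorem squeezerBlock_transpose (N : ℕ) (r : Fin N → ℝ) :
    (squeezerBlock N r)ᵀ = squeezerBlock N r :=
  diagonal_transpose _

theorem squeezerBlock_half_mul_self (N : ℕ) (r : Fin N → ℝ) :
    squeezerBlock N (fun j => r j / 2) * squeezerBlock N (fun j => r j / 2) =
      squeezerBlock N r := by
  rw [squeezerBlock_mul]
  congr 1
  ext j
  simp

theorem squeezerBlock_symplectic (N : ℕ) (r : Fin N → ℝ) :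
    squeezerBlock N r * Omega N * (squeezerBlock N r)ᵀ = Omega N := by
  rw [squeezerBlock_transpose]
  ext ⟨i, k⟩ ⟨j, l⟩
  rcases eq_or_ne i j with rfl | hij <;> fin_cases k <;> fin_cases l <;>
    simp [squeezerBlock, Omega, kroneckerMap_apply, one_apply, ← Real.exp_add, *]

theorem exists_orthogonal_symplectic_diagonalization
    {A : Matrix (Fin N × Fin 2) (Fin N × Fin 2) ℝ} (hA : A.PosSemidef)
    (hAΩ : A * Omega N * Aᵀ = Omega N) :
    ∃ (O : Matrix (Fin N × Fin 2) (Fin N × Fin 2) ℝ) (r : Fin N → ℝ),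
      Oᵀ * O = 1 ∧ O * Omega N * Oᵀ = Omega N ∧ A = O * squeezerBlock N r * Oᵀ := by
  set J := (Omega N)ᵀ.toEuclideanLin
  have hJ := isCompatibleComplexStructure_omega_transpose N
  have hT : A.toEuclideanLin.IsPositive := Matrix.isPositive_toEuclideanLin_iff.mpr hA
  have hAJA : A * (Omega N)ᵀ * A = (Omega N)ᵀ := by
    rw [← conjTranspose_eq_transpose_of_trivial A, hA.isHermitian.eq] at hAΩ
    rw [omega_transpose, mul_neg, neg_mul, hAΩ]
  have hTJT : ∀ x, A.toEuclideanLin (J (A.toEuclideanLin x)) = J x := fun x => by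
    rw [← Matrix.toEuclideanLin_mul_apply, ← Matrix.toEuclideanLin_mul_apply, hAJA]
  obtain ⟨u, μ, hu, hTu⟩ :=
    exists_orthonormal_complexFrame hT.isSymmetric hJ hTJT (n := N) (by simp [mul_comm])
  have hμ : ∀ j, 0 < μ j := fun j => hJ.pos_of_apply_eq_smul hT hTJT (hu.ne_zero (j, 0)) (hTu j)
  set O := matrixOfColumns (complexFrame J u)
  have hAO : A * O = O * squeezerBlock N (fun j => Real.log (μ j)) := by
    refine mul_matrixOfColumns_eq fun ⟨j, k⟩ => ?_
    fin_cases k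
    · simp [complexFrame, hTu, Real.exp_log (hμ j)]
    · simp [complexFrame, apply_map_eq_inv_smul_of_apply_eq_smul hTJT (hTu j), Real.exp_neg,
        Real.exp_log (hμ j)]
  refine ⟨O, fun j => Real.log (μ j), transpose_matrixOfColumns_mul_self hu,
    symplectic_matrixOfColumns_complexFrame hu, ?_⟩
  rw [← hAO, mul_assoc, mul_eq_one_comm.mp (transpose_matrixOfColumns_mul_self hu), mul_one]

end Symplectic

theorem bloch_messiah_general (N : ℕ)
    (S : Matrix (Fin N × Fin 2) (Fin N × Fin 2) ℝ)
    (hS : S * Omega N * Sᵀ = Omega N) :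
    ∃ (O O' : Matrix (Fin N × Fin 2) (Fin N × Fin 2) ℝ) (r : Fin N → ℝ),
      O * Omega N * Oᵀ = Omega N ∧ O' * Omega N * O'ᵀ = Omega N ∧
      Oᵀ * O = 1 ∧ O'ᵀ * O' = 1 ∧
      S = O' * squeezerBlock N r * O := by
  obtain ⟨O', r, hO', hO'Ω, hSS⟩ := exists_orthogonal_symplectic_diagonalization
    (by simpa [conjTranspose_eq_transpose_of_trivial] using posSemidef_self_mul_conjTranspose S)
    (symplectic_mul hS (by simpa using transpose_mul_omega_mul_of_symplectic hS))
  set D := squeezerBlock N fun j => r j / 2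
  set Dinv := squeezerBlock N fun j => -(r j / 2)
  have hDinv : Dinv * D = 1 := by
    rw [squeezerBlock_mul, ← squeezerBlock_zero N]
    congr 1
    ext j
    simp
  have hQP : Dinv * O'ᵀ * (O' * D) = 1 := by
    rw [mul_assoc, ← mul_assoc O'ᵀ, hO', one_mul, hDinv]
  have hSS' : S * Sᵀ = O' * D * (O' * D)ᵀ := by
    rw [hSS, transpose_mul, squeezerBlock_transpose, ← squeezerBlock_half_mul_self N r]
    simp only [mul_assoc, D]
  refine ⟨Dinv * O'ᵀ * S, O', fun j => r j / 2,
    symplectic_mul (symplectic_mul (squeezerBlock_symplectic N _)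
      (by simpa using transpose_mul_omega_mul_of_symplectic hO'Ω)) hS,
    hO'Ω, transpose_mul_self_eq_one_of_mul_transpose_eq hQP hSS', hO', ?_⟩
  calc S = O' * (D * Dinv) * O'ᵀ * S := by
        rw [mul_eq_one_comm.mp hDinv, mul_one, mul_eq_one_comm.mp hO', one_mul]
    _ = O' * D * (Dinv * O'ᵀ * S) := by simp only [mul_assoc]

/-- **Bloch–Messiah decomposition**: any symplectic matrix `S ∈ Sp(2N,ℝ)` can
be written as `S = O' ⬝ (⊕_j exp(r_j Z)) ⬝ O` with `O, O'` symplectic and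
orthogonal. -/
theorem bloch_messiah (N : ℕ) (hN : 0 < N)
    (S : Matrix (Fin N × Fin 2) (Fin N × Fin 2) ℝ)
    (hS : S * Omega N * Sᵀ = Omega N) :
    ∃ (O O' : Matrix (Fin N × Fin 2) (Fin N × Fin 2) ℝ) (r : Fin N → ℝ),
      O * Omega N * Oᵀ = Omega N ∧ O' * Omega N * O'ᵀ = Omega N ∧
      Oᵀ * O = 1 ∧ O'ᵀ * O' = 1 ∧
      S = O' * squeezerBlock N r * O :=
  bloch_messiah_general N S hS
end

section
/- Wigner function of a Gaussian state: Let N be a positive natural number, let σ be a real symmetric positive-definite 2N×2N matrix, and let μ, x ∈ ℝ^{2N}. Then (2π)^{−2N} · ∫_{ℝ^{2N}} exp(i·xᵀΩr) · exp(−i·μᵀΩr) · exp(−(1/4)·rᵀΩᵀσΩr) dr = π^{−N} · (det σ)^{−1/2} · exp(−(x−μ)ᵀσ⁻¹(x−μ)). (That is, the symplectic Fourier transform of the Gaussian characteristic function with mean μ and covariance σ is the Gaussian Wigner function.) -/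
/-!
Substituting `s = Ω r` (with `det Ω = 1`) turns the integral into the Fourier transform of the
Gaussian `exp (-¼ sᵀ σ s)` at `x - μ`. Writing `σ = Cᵀ C` with `C` invertible and substituting
`s = C⁻¹ u` reduces that to a product of one-dimensional Gaussian Fourier integrals; the Jacobian
`|det C|⁻¹ = (det σ)^{-1/2}` and `‖C⁻ᵀ (x - μ)‖² = (x - μ)ᵀ σ⁻¹ (x - μ)` give the right-hand side.
-/

open Matrix Kronecker MeasureTheory

/-- The real bilinear form `uᵀ M v = ∑_{p,q} u_p M_{pq} v_q`. -/
def bilinForm {ι : Type*} [Fintype ι] (M : Matrix ι ι ℝ) (u v : ι → ℝ) : ℝ :=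
  ∑ p, ∑ q, u p * M p q * v q

lemma bilinForm_eq_dotProduct {ι : Type*} [Fintype ι] (M : Matrix ι ι ℝ) (u v : ι → ℝ) :
    bilinForm M u v = u ⬝ᵥ M *ᵥ v := by
  simp [bilinForm, dotProduct, mulVec, Finset.mul_sum, mul_assoc]

lemma det_Omega (N : ℕ) : (Omega N).det = 1 := by
  simp [Omega, det_kronecker, det_fin_two]

lemma Matrix.mulVec_dotProduct_mulVec_mulVec {α m n : Type*} [CommSemiring α] [Fintype m]
    [Fintype n] (A : Matrix m n α) (M : Matrix m m α) (u v : n → α) :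
    A *ᵥ u ⬝ᵥ M *ᵥ A *ᵥ v = u ⬝ᵥ (Aᵀ * M * A) *ᵥ v := by
  rw [← mulVec_mulVec, ← mulVec_mulVec, dotProduct_transpose_mulVec, dotProduct_comm]

section GaussianIntegral

variable {ι : Type*} [Fintype ι]

open scoped Real

theorem integral_cexp_neg_quarter_dotProduct_self_add (w : ι → ℝ) :
    ∫ u : ι → ℝ, Complex.exp (-(1 / 4 : ℂ) * (u ⬝ᵥ u : ℝ) + Complex.I * (w ⬝ᵥ u : ℝ))
      = (4 * π : ℂ) ^ (Fintype.card ι / 2 : ℂ) * Complex.exp (-(w ⬝ᵥ w : ℝ)) := by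
  have hsq (u : ι → ℝ) : ((u ⬝ᵥ u : ℝ) : ℂ) = ∑ i, (u i : ℂ) ^ 2 := by
    push_cast [dotProduct, sq]; rfl
  have hlin (u : ι → ℝ) :
      Complex.I * ((w ⬝ᵥ u : ℝ) : ℂ) = ∑ i, (Complex.I * w i) * u i := by
    push_cast [dotProduct, Finset.mul_sum, mul_assoc]; rfl
  have hquarter : (0 : ℝ) < (1 / 4 : ℂ).re := by norm_num
  simp_rw [hsq, hlin, GaussianFourier.integral_cexp_neg_mul_sum_add hquarter]
  congr 2
  · field_simp
  · simp [mul_pow, Finset.sum_neg_distrib]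

variable [DecidableEq ι]

theorem integral_comp_mulVec {E : Type*} [NormedAddCommGroup E] [NormedSpace ℝ E]
    {B : Matrix ι ι ℝ} (hB : B.det ≠ 0) (g : (ι → ℝ) → E) :
    ∫ s, g s = |B.det| • ∫ u, g (B *ᵥ u) := by
  let e := (B.toLinearEquiv' (B.invertibleOfIsUnitDet hB.isUnit)).toContinuousLinearEquiv
  have := e.toHomeomorph.measurableEmbedding.integral_map (μ := volume) g
  rw [show ⇑e.toHomeomorph = toLin' B from rfl, Real.map_matrix_volume_pi_eq_smul_volume_pi hB,
    integral_smul_measure, ENNReal.toReal_ofReal (abs_nonneg _), abs_inv] at this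
  simp only [toLin'_apply] at this
  rw [← this, smul_smul, mul_inv_cancel₀ (abs_ne_zero.2 hB), one_smul]

open scoped MatrixOrder in
theorem Matrix.PosDef.exists_transpose_mul_mul_eq_one {σ : Matrix ι ι ℝ} (hσ : σ.PosDef) :
    ∃ B : Matrix ι ι ℝ, Bᵀ * σ * B = 1 := by
  obtain ⟨C, hC, rfl⟩ := CStarAlgebra.isStrictlyPositive_iff_eq_star_mul_self.mp
    hσ.isStrictlyPositive
  refine ⟨C⁻¹, ?_⟩
  have hCC : C * C⁻¹ = 1 := mul_nonsing_inv C ((isUnit_iff_isUnit_det C).mp hC)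
  rw [star_eq_conjTranspose, conjTranspose_eq_transpose_of_trivial, ← Matrix.mul_assoc,
    Matrix.mul_assoc _ C, ← transpose_mul, hCC, transpose_one, Matrix.one_mul]

theorem integral_cexp_neg_quarter_dotProduct_mulVec_add {σ : Matrix ι ι ℝ} (hσ : σ.PosDef)
    (t : ι → ℝ) :
    ∫ s : ι → ℝ, Complex.exp (-(1 / 4 : ℂ) * (s ⬝ᵥ σ *ᵥ s : ℝ) + Complex.I * (t ⬝ᵥ s : ℝ))
      = (4 * π : ℂ) ^ (Fintype.card ι / 2 : ℂ) / √σ.det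
          * Complex.exp (-(t ⬝ᵥ σ⁻¹ *ᵥ t : ℝ)) := by
  obtain ⟨B, hB⟩ := hσ.exists_transpose_mul_mul_eq_one
  have hdet : B.det ^ 2 * σ.det = 1 := by
    simpa [det_mul, sq, mul_comm, mul_left_comm] using congrArg det hB
  have hB0 : B.det ≠ 0 := by rintro h; simp [h] at hdet
  have habs : |B.det| = (√σ.det)⁻¹ := by
    rw [← Real.sqrt_sq_eq_abs, ← Real.sqrt_inv, eq_inv_of_mul_eq_one_left hdet]
  have hinv : B * Bᵀ = σ⁻¹ := by
    refine (inv_eq_left_inv ?_).symm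
    rwa [Matrix.mul_assoc, mul_eq_one_comm]
  have hquad (u : ι → ℝ) : B *ᵥ u ⬝ᵥ σ *ᵥ B *ᵥ u = u ⬝ᵥ u := by
    rw [mulVec_dotProduct_mulVec_mulVec, hB, one_mulVec]
  have hlin (u : ι → ℝ) : t ⬝ᵥ B *ᵥ u = Bᵀ *ᵥ t ⬝ᵥ u := by
    rw [dotProduct_mulVec, mulVec_transpose]
  calc
    _ = |B.det| • ∫ u : ι → ℝ, Complex.exp (-(1 / 4 : ℂ) * (B *ᵥ u ⬝ᵥ σ *ᵥ B *ᵥ u : ℝ)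
          + Complex.I * (t ⬝ᵥ B *ᵥ u : ℝ)) := by
      rw [integral_comp_mulVec hB0]
    _ = _ := by
      simp_rw [hquad, hlin, integral_cexp_neg_quarter_dotProduct_self_add,
        dotProduct_transpose_mulVec, mulVec_mulVec, hinv, habs, Complex.real_smul]
      push_cast
      ring

end GaussianIntegral

theorem wigner_of_gaussian_general (N : ℕ)
    (σ : Matrix (Fin N × Fin 2) (Fin N × Fin 2) ℝ) (hσ : σ.PosDef)
    (μ x : (Fin N × Fin 2) → ℝ) :
    (((2 * Real.pi) ^ (2 * N) : ℝ)⁻¹ : ℂ) *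
      ∫ r : (Fin N × Fin 2) → ℝ,
        Complex.exp (Complex.I * (bilinForm (Omega N) x r : ℝ)) *
        Complex.exp (-Complex.I * (bilinForm (Omega N) μ r : ℝ)) *
        Complex.exp (-(1 / 4 : ℂ) * (bilinForm ((Omega N)ᵀ * σ * Omega N) r r : ℝ))
      = (((Real.pi ^ N : ℝ)⁻¹ / Real.sqrt σ.det) *
          Real.exp (-(bilinForm σ⁻¹ (x - μ) (x - μ))) : ℝ) := by
  have integrand (r : (Fin N × Fin 2) → ℝ) :
      Complex.exp (Complex.I * (bilinForm (Omega N) x r : ℝ)) *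
        Complex.exp (-Complex.I * (bilinForm (Omega N) μ r : ℝ)) *
        Complex.exp (-(1 / 4 : ℂ) * (bilinForm ((Omega N)ᵀ * σ * Omega N) r r : ℝ))
      = Complex.exp (-(1 / 4 : ℂ) * (Omega N *ᵥ r ⬝ᵥ σ *ᵥ Omega N *ᵥ r : ℝ)
          + Complex.I * ((x - μ) ⬝ᵥ Omega N *ᵥ r : ℝ)) := by
    simp only [bilinForm_eq_dotProduct, ← mulVec_dotProduct_mulVec_mulVec, sub_dotProduct,
      ← Complex.exp_add]
    push_cast
    ring_nf
  have hcard : (Fintype.card (Fin N × Fin 2) / 2 : ℂ) = N := by simp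
  calc
    _ = (((2 * Real.pi) ^ (2 * N) : ℝ)⁻¹ : ℂ) * ∫ s : (Fin N × Fin 2) → ℝ,
          Complex.exp (-(1 / 4 : ℂ) * (s ⬝ᵥ σ *ᵥ s : ℝ) + Complex.I * ((x - μ) ⬝ᵥ s : ℝ)) := by
      conv_rhs => rw [integral_comp_mulVec (B := Omega N) (by simp [det_Omega])]
      simp_rw [integrand, det_Omega, abs_one, one_smul]
    _ = _ := by
      rw [integral_cexp_neg_quarter_dotProduct_mulVec_add hσ, hcard, Complex.cpow_natCast,
        bilinForm_eq_dotProduct]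
      push_cast
      rw [pow_mul]
      field_simp
      ring

/-- **Wigner function of a Gaussian state**: the symplectic Fourier transform
of the Gaussian characteristic function with mean `μ` and covariance `σ` is
the Gaussian Wigner function:
`(2π)^{−2N} ∫ exp(i xᵀΩr) exp(−i μᵀΩr) exp(−(1/4) rᵀΩᵀσΩr) dr
  = π^{−N} (det σ)^{−1/2} exp(−(x−μ)ᵀσ⁻¹(x−μ))`. -/
theorem wigner_of_gaussian (N : ℕ) (hN : 0 < N)
    (σ : Matrix (Fin N × Fin 2) (Fin N × Fin 2) ℝ) (hsymm : σᵀ = σ) (hσ : σ.PosDef)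
    (μ x : (Fin N × Fin 2) → ℝ) :
    (((2 * Real.pi) ^ (2 * N) : ℝ)⁻¹ : ℂ) *
      ∫ r : (Fin N × Fin 2) → ℝ,
        Complex.exp (Complex.I * (bilinForm (Omega N) x r : ℝ)) *
        Complex.exp (-Complex.I * (bilinForm (Omega N) μ r : ℝ)) *
        Complex.exp (-(1 / 4 : ℂ) * (bilinForm ((Omega N)ᵀ * σ * Omega N) r r : ℝ))
      = (((Real.pi ^ N : ℝ)⁻¹ / Real.sqrt σ.det) *
          Real.exp (-(bilinForm σ⁻¹ (x - μ) (x - μ))) : ℝ) :=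
  wigner_of_gaussian_general N σ hσ μ x
end

section
/- Maximum-entropy property of the thermal distribution (Jaynes' principle / Gaussian extremality for a single mode): Let n̄ > 0 and let p : ℕ → ℝ satisfy p(n) ≥ 0 for all n, ∑_{n=0}^∞ p(n) = 1, and ∑_{n=0}^∞ n·p(n) = n̄ (both series summable). Then the Shannon entropy of p satisfies −∑_{n=0}^∞ p(n)·ln p(n) ≤ s_th(n̄), where s_th(x) = (x+1)·ln(x+1) − x·ln x, with the convention 0·ln 0 = 0 (the entropy series, having nonnegative terms, is interpreted as a sum in [0,∞]). -/
/-!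
Gibbs' inequality: for `q > 0`, `-p log p ≤ -p log q + q - p`, so when `p` and `q` are both
probability distributions the entropy of `p` is at most its cross entropy with `q`. Take for `q`
the thermal (geometric) distribution `q n = (n̄ + 1)⁻¹ (n̄ / (n̄ + 1)) ^ n` of mean `n̄`: since
`-log q n` is affine in `n`, the cross entropy of `p` with `q` depends only on the mean of `p`,
and equals `s_th(n̄)`.
-/

/-- The thermal entropy function `s_th(x) = (x+1) ln(x+1) − x ln x`. -/
noncomputable def sTh (x : ℝ) : ℝ := (x + 1) * Real.log (x + 1) - x * Real.log x

open Real

lemma Real.negMulLog_le_mul_neg_log_add_sub {p q : ℝ} (hp : 0 ≤ p) (hq : 0 < q) :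
    negMulLog p ≤ p * -log q + (q - p) :=
  calc negMulLog p = negMulLog (q * (p / q)) := by rw [mul_div_cancel₀ _ hq.ne']
    _ = p * -log q + q * negMulLog (p / q) := by
      rw [negMulLog_mul, negMulLog]; field_simp
    _ ≤ p * -log q + q * (1 - p / q) := by
      gcongr; exact negMulLog_le_one_sub_self (div_nonneg hp hq.le)
    _ = p * -log q + (q - p) := by field_simp

theorem Real.tsum_ofReal_negMulLog_le {ι : Type*} {p q : ι → ℝ} {c : ℝ} (hp : ∀ i, 0 ≤ p i)
    (hq : ∀ i, 0 < q i) (hp_sum : HasSum p 1) (hq_sum : HasSum q 1)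
    (hcross : HasSum (fun i => p i * -log (q i)) c) :
    ∑' i, ENNReal.ofReal (negMulLog (p i)) ≤ ENNReal.ofReal c := by
  have hp_le_one (i : ι) : p i ≤ 1 := le_hasSum hp_sum i fun j _ => hp j
  have hgibbs (i : ι) := negMulLog_le_mul_neg_log_add_sub (hp i) (hq i)
  have hbound : HasSum (fun i => p i * -log (q i) + (q i - p i)) c := by
    simpa using hcross.add (hq_sum.sub hp_sum)
  have hbound_nonneg (i : ι) : 0 ≤ p i * -log (q i) + (q i - p i) :=
    (negMulLog_nonneg (hp i) (hp_le_one i)).trans (hgibbs i)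
  calc ∑' i, ENNReal.ofReal (negMulLog (p i))
      ≤ ∑' i, ENNReal.ofReal (p i * -log (q i) + (q i - p i)) :=
        ENNReal.tsum_le_tsum fun i => ENNReal.ofReal_le_ofReal (hgibbs i)
    _ = ENNReal.ofReal c := by
      rw [← ENNReal.ofReal_tsum_of_nonneg hbound_nonneg hbound.summable, hbound.tsum_eq]

noncomputable def thermalDist (nbar : ℝ) (n : ℕ) : ℝ := (nbar + 1)⁻¹ * (nbar / (nbar + 1)) ^ n

section thermalDist

variable {nbar : ℝ}

lemma thermalDist_pos (hnbar : 0 < nbar) (n : ℕ) : 0 < thermalDist nbar n := by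
  unfold thermalDist; positivity

lemma hasSum_thermalDist (hnbar : 0 ≤ nbar) : HasSum (thermalDist nbar) 1 := by
  have h1 : 0 < nbar + 1 := by linarith
  have hratio : nbar / (nbar + 1) < 1 := (div_lt_one h1).mpr (lt_add_one nbar)
  have hcoef : (nbar + 1)⁻¹ * (1 - nbar / (nbar + 1))⁻¹ = 1 := by field_simp; ring
  have hgeom := (hasSum_geometric_of_lt_one (by positivity) hratio).mul_left (nbar + 1)⁻¹
  rwa [hcoef] at hgeom

lemma neg_log_thermalDist (hnbar : 0 < nbar) (n : ℕ) :
    -log (thermalDist nbar n) = log (nbar + 1) + n * (log (nbar + 1) - log nbar) := by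
  have h1 : 0 < nbar + 1 := by linarith
  rw [thermalDist, log_mul (by positivity) (by positivity), log_inv, log_pow,
    log_div hnbar.ne' h1.ne']
  ring

lemma hasSum_mul_neg_log_thermalDist (hnbar : 0 < nbar) {p : ℕ → ℝ} (hp_sum : HasSum p 1)
    (hmean : HasSum (fun n : ℕ => (n : ℝ) * p n) nbar) :
    HasSum (fun n => p n * -log (thermalDist nbar n)) (sTh nbar) := by
  have hvalue : sTh nbar = log (nbar + 1) * 1 + (log (nbar + 1) - log nbar) * nbar := by
    unfold sTh; ring
  rw [hvalue]
  refine ((hp_sum.mul_left _).add (hmean.mul_left _)).congr_fun fun n => ?_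
  rw [neg_log_thermalDist hnbar]
  ring

end thermalDist

/-- **Maximum-entropy property of the thermal distribution** (Jaynes'
principle / Gaussian extremality for a single mode): any probability
distribution `p` on `ℕ` with mean `n̄ > 0` has Shannon entropy (interpreted,
via its nonnegative terms, as a sum in `[0,∞]`) at most `s_th(n̄)`.
(Note `Real.log 0 = 0` in Mathlib, so the convention `0·ln 0 = 0` holds.) -/
theorem thermal_max_entropy (nbar : ℝ) (h : 0 < nbar) (p : ℕ → ℝ)
    (hp : ∀ n, 0 ≤ p n)
    (hsum : Summable p) (hnorm : ∑' n : ℕ, p n = 1)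
    (hmean_sum : Summable (fun n : ℕ => (n : ℝ) * p n))
    (hmean : ∑' n : ℕ, (n : ℝ) * p n = nbar) :
    ∑' n : ℕ, ENNReal.ofReal (-(p n * Real.log (p n))) ≤ ENNReal.ofReal (sTh nbar) := by
  have hp_sum : HasSum p 1 := hnorm ▸ hsum.hasSum
  have hmean' : HasSum (fun n : ℕ => (n : ℝ) * p n) nbar := hmean ▸ hmean_sum.hasSum
  simpa only [negMulLog, neg_mul] using
    tsum_ofReal_negMulLog_le hp (thermalDist_pos h) hp_sum (hasSum_thermalDist h.le)
      (hasSum_mul_neg_log_thermalDist h hp_sum hmean')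
end

section
/- Temperature threshold for entanglement survival, T_e < 2T_s: Let ω, T_s, T_e > 0 be real numbers, and define the Bose–Einstein occupations n̄_s = 1/(exp(ω/T_s) − 1) and n̄_e = 1/(exp(ω/T_e) − 1). Then n̄_s + √(n̄_s·(n̄_s+1)) > n̄_e if and only if T_e < 2·T_s. (Hence a two-mode squeezed vacuum with squeezed occupation n̄_s immersed in isotropic thermal noise of occupation n̄_e remains entangled exactly when the environment temperature is below twice the squeezing temperature.) -/
/-!
With `s = exp (ω / (2 T_s)) > 1` one has `n̄_s = 1 / (s² - 1)` and `n̄_s (n̄_s + 1) = (s / (s² - 1))²`,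
so `n̄_s + √(n̄_s (n̄_s + 1)) = (1 + s) / (s² - 1) = 1 / (s - 1)`: the left-hand side is the
Bose–Einstein occupation at temperature `2 T_s`. Since the occupation is strictly increasing in
the temperature, the inequality holds exactly when `T_e < 2 T_s`.
-/

open Real

lemma one_div_sq_sub_one_add_sqrt {s : ℝ} (hs : 1 < s) :
    1 / (s ^ 2 - 1) + √(1 / (s ^ 2 - 1) * (1 / (s ^ 2 - 1) + 1)) = 1 / (s - 1) := by
  have hs2 : 0 < s ^ 2 - 1 := by nlinarith
  have hprod : 1 / (s ^ 2 - 1) * (1 / (s ^ 2 - 1) + 1) = (s / (s ^ 2 - 1)) ^ 2 := by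
    field_simp
    ring
  rw [hprod, sqrt_sq (by positivity)]
  have hs1 : s - 1 ≠ 0 := by linarith
  field_simp
  ring

lemma one_div_exp_sub_one_lt_iff {x y : ℝ} (hx : 0 < x) (hy : 0 < y) :
    1 / (exp x - 1) < 1 / (exp y - 1) ↔ y < x := by
  rw [one_div_lt_one_div (by linarith [add_one_lt_exp hx.ne']) (by linarith [add_one_lt_exp hy.ne']),
    sub_lt_sub_iff_right, exp_lt_exp]

/-- **Temperature threshold for entanglement survival, `T_e < 2T_s`**: with
Bose–Einstein occupations `n̄_s = 1/(e^{ω/T_s} − 1)` and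
`n̄_e = 1/(e^{ω/T_e} − 1)`, the entanglement condition
`n̄_s + √(n̄_s(n̄_s+1)) > n̄_e` holds iff `T_e < 2T_s`. -/
theorem entanglement_temperature_threshold (ω Ts Te : ℝ)
    (hω : 0 < ω) (hTs : 0 < Ts) (hTe : 0 < Te) :
    (1 / (Real.exp (ω / Ts) - 1) +
        Real.sqrt ((1 / (Real.exp (ω / Ts) - 1)) * (1 / (Real.exp (ω / Ts) - 1) + 1))
      > 1 / (Real.exp (ω / Te) - 1)) ↔ Te < 2 * Ts := by
  have hx : 0 < ω / (2 * Ts) := by positivity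
  have hexp : exp (ω / Ts) = exp (ω / (2 * Ts)) ^ 2 := by
    rw [← exp_nat_mul]
    congr 1
    field_simp
    norm_num
  rw [hexp, one_div_sq_sub_one_add_sqrt (one_lt_exp_iff.mpr hx), gt_iff_lt,
    one_div_exp_sub_one_lt_iff (by positivity) hx, div_lt_div_iff_of_pos_left hω (by positivity) hTe]
end

section
/- Partial-transpose symplectic eigenvalue of the polariton toy model: Let C ∈ [0,1), D ≥ 0, n̄_e ≥ 0. Define a = (1+C)/(1−C), b = 2√C/(1−C) (so a² − b² = 1), the two-mode squeezing matrix S = [[a·I₂, b·Z],[b·Z, a·I₂]], σ² = 8·D·(1+C)·(1+2n̄_e)/(1−C)², V_× = −(2√C/(1+C))·σ², and the 4×4 matrix V whose only nonzero entries (in quadrature ordering (q₁,p₁,q₂,p₂)) are V₂₂ = V₄₄ = σ² and V₂₄ = V₄₂ = V_×. Set σ_out = S·Sᵀ + V and σ̃ = T·σ_out·T with T = I₂ ⊕ Z. Then −ν̃₋² is an eigenvalue of the matrix (Ω·σ̃)², where ν̃₋² = (1−√C)⁶·(1 + C − 2√C + 8·D·(1+2n̄_e)) / (1−C)⁴; moreover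 ν̃₋ is the smallest symplectic eigenvalue of σ̃. -/
open Matrix

/-- The Pauli-Z matrix `Z = diag(1,−1)`. -/
def Zmat : Matrix (Fin 2) (Fin 2) ℝ := !![1, 0; 0, -1]

/-- The 4×4 standard symplectic form `Ω = Ω₁ ⊕ Ω₁`. -/
def Omega4 : Matrix (Fin 2 ⊕ Fin 2) (Fin 2 ⊕ Fin 2) ℝ :=
  Matrix.fromBlocks !![0, 1; -1, 0] 0 0 !![0, 1; -1, 0]

/-- Partial transposition of the second mode: `T = I₂ ⊕ Z`. -/
def Tpt : Matrix (Fin 2 ⊕ Fin 2) (Fin 2 ⊕ Fin 2) ℝ :=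
  Matrix.fromBlocks 1 0 0 Zmat

/-- The two-mode-squeezing matrix `S = [[a I₂, b Z],[b Z, a I₂]]` with
`a = (1+C)/(1−C)` and `b = 2√C/(1−C)`. -/
noncomputable def Stoy (C : ℝ) : Matrix (Fin 2 ⊕ Fin 2) (Fin 2 ⊕ Fin 2) ℝ :=
  Matrix.fromBlocks (((1 + C) / (1 - C)) • 1) ((2 * Real.sqrt C / (1 - C)) • Zmat)
    ((2 * Real.sqrt C / (1 - C)) • Zmat) (((1 + C) / (1 - C)) • 1)

/-- The phonon-diffusion noise variance `σ² = 8D(1+C)(1+2n̄_e)/(1−C)²`. -/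
noncomputable def sigSq (C D ne : ℝ) : ℝ := 8 * D * (1 + C) * (1 + 2 * ne) / (1 - C) ^ 2

/-- The cross-noise `V_× = −(2√C/(1+C)) σ²`. -/
noncomputable def Vx (C D ne : ℝ) : ℝ := -(2 * Real.sqrt C / (1 + C)) * sigSq C D ne

/-- The additive noise matrix `V` (quadrature ordering `(q₁,p₁,q₂,p₂)`):
nonzero entries `V₂₂ = V₄₄ = σ²` and `V₂₄ = V₄₂ = V_×`. -/
noncomputable def Vnoise (C D ne : ℝ) : Matrix (Fin 2 ⊕ Fin 2) (Fin 2 ⊕ Fin 2) ℝ :=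
  Matrix.fromBlocks !![0, 0; 0, sigSq C D ne] !![0, 0; 0, Vx C D ne]
    !![0, 0; 0, Vx C D ne] !![0, 0; 0, sigSq C D ne]

/-- The partially transposed stationary output covariance matrix
`σ̃ = T (S Sᵀ + V) T`. -/
noncomputable def sigmaTilde (C D ne : ℝ) : Matrix (Fin 2 ⊕ Fin 2) (Fin 2 ⊕ Fin 2) ℝ :=
  Tpt * (Stoy C * (Stoy C)ᵀ + Vnoise C D ne) * Tpt

/-- The squared smallest PT symplectic eigenvalue
`ν̃₋² = (1−√C)⁶ (1 + C − 2√C + 8D(1+2n̄_e)) / (1−C)⁴`. -/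
noncomputable def nuTildeSq (C D ne : ℝ) : ℝ :=
  (1 - Real.sqrt C) ^ 6 * (1 + C - 2 * Real.sqrt C + 8 * D * (1 + 2 * ne)) / (1 - C) ^ 4


set_option maxHeartbeats 2000000 in
private lemma sigmaTilde_eq (s D ne : ℝ) (hs0 : 0 ≤ s) (hs1 : s < 1) :
    sigmaTilde (s^2) D ne =
      Matrix.fromBlocks
        !![((1+s^2)^2+4*s^2)/(1-s^2)^2, 0; 0, ((1+s^2)^2+4*s^2)/(1-s^2)^2 + 8*D*(1+2*ne)*(1+s^2)/(1-s^2)^2]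
        !![4*s*(1+s^2)/(1-s^2)^2, 0; 0, 4*s*(1+s^2)/(1-s^2)^2 + 16*s*D*(1+2*ne)/(1-s^2)^2]
        !![4*s*(1+s^2)/(1-s^2)^2, 0; 0, 4*s*(1+s^2)/(1-s^2)^2 + 16*s*D*(1+2*ne)/(1-s^2)^2]
        !![((1+s^2)^2+4*s^2)/(1-s^2)^2, 0; 0, ((1+s^2)^2+4*s^2)/(1-s^2)^2 + 8*D*(1+2*ne)*(1+s^2)/(1-s^2)^2] := by
  have hss : Real.sqrt (s^2) = s := Real.sqrt_sq hs0
  have h1 : (1:ℝ) - s^2 ≠ 0 := by nlinarith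
  have h2 : (1:ℝ) + s^2 ≠ 0 := by positivity
  have hout : Stoy (s^2) * (Stoy (s^2))ᵀ + Vnoise (s^2) D ne =
      Matrix.fromBlocks
        !![((1+s^2)^2+4*s^2)/(1-s^2)^2, 0; 0, ((1+s^2)^2+4*s^2)/(1-s^2)^2 + 8*D*(1+2*ne)*(1+s^2)/(1-s^2)^2]
        !![4*s*(1+s^2)/(1-s^2)^2, 0; 0, -(4*s*(1+s^2)/(1-s^2)^2 + 16*s*D*(1+2*ne)/(1-s^2)^2)]
        !![4*s*(1+s^2)/(1-s^2)^2, 0; 0, -(4*s*(1+s^2)/(1-s^2)^2 + 16*s*D*(1+2*ne)/(1-s^2)^2)]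
        !![((1+s^2)^2+4*s^2)/(1-s^2)^2, 0; 0, ((1+s^2)^2+4*s^2)/(1-s^2)^2 + 8*D*(1+2*ne)*(1+s^2)/(1-s^2)^2] := by
    ext i j
    rcases i with i | i <;> rcases j with j | j <;> fin_cases i <;> fin_cases j <;>
      simp [Stoy, Vnoise, Zmat, sigSq, Vx, Matrix.mul_apply, Fintype.sum_sum_type,
        Fin.sum_univ_two, Matrix.one_apply, hss] <;>
      field_simp <;> ring
  rw [sigmaTilde, hout]
  ext i j
  rcases i with i | i <;> rcases j with j | j <;> fin_cases i <;> fin_cases j <;>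
    simp [Tpt, Zmat, Matrix.mul_apply, Fintype.sum_sum_type, Fin.sum_univ_two,
      Matrix.one_apply]

set_option maxHeartbeats 2000000 in
private lemma Nform (α β γ δ : ℝ) :
    (Omega4 * Matrix.fromBlocks !![α,0;0,γ] !![β,0;0,δ] !![β,0;0,δ] !![α,0;0,γ]) *
    (Omega4 * Matrix.fromBlocks !![α,0;0,γ] !![β,0;0,δ] !![β,0;0,δ] !![α,0;0,γ]) =
      Matrix.fromBlocks ((-(α*γ+β*δ)) • (1 : Matrix (Fin 2) (Fin 2) ℝ)) ((-(α*δ+β*γ)) • 1)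
        ((-(α*δ+β*γ)) • 1) ((-(α*γ+β*δ)) • 1) := by
  ext i j
  rcases i with i | i <;> rcases j with j | j <;> fin_cases i <;> fin_cases j <;>
    simp [Omega4, Matrix.mul_apply, Fintype.sum_sum_type, Fin.sum_univ_two,
      Matrix.one_apply] <;> ring

set_option maxHeartbeats 4000000

/-- **Partial-transpose symplectic eigenvalue of the polariton toy model**:
`−ν̃₋²` is an eigenvalue of `(Ω σ̃)²`, and `ν̃₋ = √(ν̃₋²)` is the smallest
symplectic eigenvalue of `σ̃` (symplectic eigenvalues of `σ̃` being the
positive `ν` with `−ν²` an eigenvalue of `(Ω σ̃)²`). -/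
theorem polariton_toy_model_pt_eigenvalue (C D ne : ℝ)
    (hC0 : 0 ≤ C) (hC1 : C < 1) (hD : 0 ≤ D) (hne : 0 ≤ ne) :
    (∃ v : (Fin 2 ⊕ Fin 2) → ℝ, v ≠ 0 ∧
        ((Omega4 * sigmaTilde C D ne) * (Omega4 * sigmaTilde C D ne)).mulVec v
          = (-(nuTildeSq C D ne)) • v) ∧
    (∀ ν : ℝ, 0 < ν →
        (∃ v : (Fin 2 ⊕ Fin 2) → ℝ, v ≠ 0 ∧
          ((Omega4 * sigmaTilde C D ne) * (Omega4 * sigmaTilde C D ne)).mulVec v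
            = (-(ν ^ 2)) • v) →
        Real.sqrt (nuTildeSq C D ne) ≤ ν) := by
  obtain ⟨s, hs0, rfl⟩ : ∃ s, 0 ≤ s ∧ C = s ^ 2 :=
      ⟨Real.sqrt C, Real.sqrt_nonneg C, (Real.sq_sqrt hC0).symm⟩
  have hss : Real.sqrt (s ^ 2) = s := Real.sqrt_sq hs0
  have hs1 : s < 1 := by nlinarith
  have h1s : (0:ℝ) < 1 - s := by linarith
  have h1s' : (1:ℝ) - s ≠ 0 := by linarith
  have h2s' : (1:ℝ) + s ≠ 0 := by linarith
  have h1s2 : (1:ℝ) - s^2 ≠ 0 := by nlinarith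
  have h2s2 : (1:ℝ) + s^2 ≠ 0 := by positivity
  set x : ℝ := -((((1+s^2)^2+4*s^2)/(1-s^2)^2) *
      (((1+s^2)^2+4*s^2)/(1-s^2)^2 + 8*D*(1+2*ne)*(1+s^2)/(1-s^2)^2) +
      (4*s*(1+s^2)/(1-s^2)^2) * (4*s*(1+s^2)/(1-s^2)^2 + 16*s*D*(1+2*ne)/(1-s^2)^2)) with hxdef
  set y : ℝ := -((((1+s^2)^2+4*s^2)/(1-s^2)^2) *
      (4*s*(1+s^2)/(1-s^2)^2 + 16*s*D*(1+2*ne)/(1-s^2)^2) +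
      (4*s*(1+s^2)/(1-s^2)^2) *
      (((1+s^2)^2+4*s^2)/(1-s^2)^2 + 8*D*(1+2*ne)*(1+s^2)/(1-s^2)^2)) with hydef
  set P : ℝ := (1+s)^2*((1+s)^2+8*D*(1+2*ne))/(1-s)^4 with hPdef
  have hN : (Omega4 * sigmaTilde (s^2) D ne) * (Omega4 * sigmaTilde (s^2) D ne) =
      Matrix.fromBlocks (x • (1 : Matrix (Fin 2) (Fin 2) ℝ)) (y • 1) (y • 1) (x • 1) := by
    rw [sigmaTilde_eq s D ne hs0 hs1]
    exact Nform _ _ _ _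
  have hxy : x - y = -(nuTildeSq (s^2) D ne) := by
    rw [hxdef, hydef, nuTildeSq, hss]
    field_simp
    ring
  have hxP : x + y = -P := by
    rw [hxdef, hydef, hPdef]
    field_simp
    ring
  have hmeq : nuTildeSq (s^2) D ne = (1-s)^2*((1-s)^2+8*D*(1+2*ne))/(1+s)^4 := by
    rw [nuTildeSq, hss]
    field_simp
    ring
  have hE : (0:ℝ) ≤ 8*D*(1+2*ne) := by positivity
  have hm0 : 0 ≤ nuTildeSq (s^2) D ne := by
    rw [hmeq]; positivity
  have hmP : nuTildeSq (s^2) D ne ≤ P := by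
    rw [hmeq, hPdef]
    apply div_le_div₀ (by positivity) (by nlinarith) (by positivity)
    nlinarith
  constructor
  · refine ⟨Sum.elim ![1, 0] ![-1, 0], ?_, ?_⟩
    · intro h
      have := congrFun h (Sum.inl 0)
      simp at this
    · rw [hN]
      ext i
      rcases i with i | i <;> fin_cases i <;>
        simp [Matrix.mulVec, dotProduct, Fintype.sum_sum_type, Fin.sum_univ_two,
          Matrix.fromBlocks, Matrix.one_apply] <;> linarith [hxy]
  · rintro ν hν ⟨v, hv0, hv⟩
    rw [hN] at hv
    have e1 := congrFun hv (Sum.inl 0)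
    have e2 := congrFun hv (Sum.inr 0)
    have e3 := congrFun hv (Sum.inl 1)
    have e4 := congrFun hv (Sum.inr 1)
    simp [Matrix.mulVec, dotProduct, Fintype.sum_sum_type, Fin.sum_univ_two,
      Matrix.fromBlocks, Matrix.one_apply] at e1 e2 e3 e4
    have hq : (x + ν^2)^2 - y^2 = 0 := by
      obtain ⟨i, hi⟩ := Function.ne_iff.mp hv0
      rcases i with i | i <;> fin_cases i
      · have h0 : ((x + ν^2)^2 - y^2) * v (Sum.inl 0) = 0 := by
          linear_combination (x + ν^2) * e1 - y * e2
        exact (mul_eq_zero.mp h0).resolve_right hi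
      · have h0 : ((x + ν^2)^2 - y^2) * v (Sum.inl 1) = 0 := by
          linear_combination (x + ν^2) * e3 - y * e4
        exact (mul_eq_zero.mp h0).resolve_right hi
      · have h0 : ((x + ν^2)^2 - y^2) * v (Sum.inr 0) = 0 := by
          linear_combination (x + ν^2) * e2 - y * e1
        exact (mul_eq_zero.mp h0).resolve_right hi
      · have h0 : ((x + ν^2)^2 - y^2) * v (Sum.inr 1) = 0 := by
          linear_combination (x + ν^2) * e4 - y * e3
        exact (mul_eq_zero.mp h0).resolve_right hi
    have hfac : (ν^2 - nuTildeSq (s^2) D ne) * (ν^2 - P) = 0 := by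
      have hm' : nuTildeSq (s^2) D ne = y - x := by linarith
      have hP' : P = -x - y := by linarith
      rw [hm', hP']
      linear_combination hq
    have hle : nuTildeSq (s^2) D ne ≤ ν^2 := by
      rcases mul_eq_zero.mp hfac with h | h
      · linarith
      · linarith
    calc Real.sqrt (nuTildeSq (s^2) D ne) ≤ Real.sqrt (ν^2) := Real.sqrt_le_sqrt hle
      _ = ν := Real.sqrt_sq hν.le
end
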